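/- arXiv:2001.04182 — 11 statements merged into one kernel-verified Lean document; each statement's English description precedes it below -/
import Mathlib

section
/- If X = (X, E) is a graph with reflexive relation E coming from the dual of a bounded lattice L (vertices are maximal partial homomorphisms f : L ⇀ 2 with (f,g) ∈ E iff f⁻¹(1) ∩ g⁻¹(0) = ∅), then E satisfies condition (R)(i): for all f, h ∈ X, if f⁻¹(1) ⊊ h⁻¹(1) then h⁻¹(1) ∩ f⁻¹(0) ≠ ∅. -/
/-- A partial homomorphism from a bounded lattice `L` to the two-element bounded
lattice `Bool` (with `false < true`), encoded as a map `L → Option Bool` whose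
domain is closed under meets and joins, contains `⊥` and `⊤`, and which preserves
meet, join, `⊥` and `⊤` on its domain. -/
def IsPartialHom {L : Type*} [Lattice L] [BoundedOrder L] (f : L → Option Bool) : Prop :=
  f ⊥ = some false ∧ f ⊤ = some true ∧
  (∀ a b va vb, f a = some va → f b = some vb → f (a ⊓ b) = some (va && vb)) ∧
  (∀ a b va vb, f a = some va → f b = some vb → f (a ⊔ b) = some (va || vb))

/-- A maximal partial homomorphism: a partial homomorphism with no proper extension
that is again a partial homomorphism. -/
def IsMaximalPartialHom {L : Type*} [Lattice L] [BoundedOrder L] (f : L → Option Bool) : Prop :=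
  IsPartialHom f ∧
    ∀ g : L → Option Bool, IsPartialHom g → (∀ a v, f a = some v → g a = some v) → g = f

section Aux

variable {L : Type*} [Lattice L] [BoundedOrder L]

/-- Up-closure of the true-set of `f`. -/
def UpTrue (f : L → Option Bool) (x : L) : Prop := ∃ t, f t = some true ∧ t ≤ x

lemma no_true_le_false {f : L → Option Bool} (hpf : IsPartialHom f)
    {t w : L} (ht : f t = some true) (hw : f w = some false) (hle : t ≤ w) : False := by
  have hj := hpf.2.2.2 t w true false ht hw
  rw [sup_eq_right.2 hle, hw] at hj
  simp at hj

/-- Closure of `f⁻¹(0) ∪ {u}` under meets, joins, and meets with the up-closure of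
`f⁻¹(1)`. -/
inductive ClA (f : L → Option Bool) (u : L) : L → Prop
  | base (x) : f x = some false → ClA f u x
  | self : ClA f u u
  | inf (x y) : ClA f u x → ClA f u y → ClA f u (x ⊓ y)
  | sup (x y) : ClA f u x → ClA f u y → ClA f u (x ⊔ y)
  | infUp (x t) : UpTrue f t → ClA f u x → ClA f u (t ⊓ x)

/-- Key lemma: for a maximal partial hom, the false-set is downward closed. -/
lemma maximal_false_down {f : L → Option Bool} (hf : IsMaximalPartialHom f)
    {u y : L} (hy : f y = some false) (huy : u ≤ y) : f u = some false := by
  classical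
  obtain ⟨hpf, hmax⟩ := hf
  -- every element of the closure lies below an element of the false-set
  have inv : ∀ x, ClA f u x → ∃ w, f w = some false ∧ x ≤ w := by
    intro x hx
    induction hx with
    | base x hx => exact ⟨x, hx, le_refl x⟩
    | self => exact ⟨y, hy, huy⟩
    | inf x y' _ _ ihx _ =>
        obtain ⟨w1, hw1, h1⟩ := ihx
        exact ⟨w1, hw1, le_trans inf_le_left h1⟩
    | sup x y' _ _ ihx ihy =>
        obtain ⟨w1, hw1, h1⟩ := ihx
        obtain ⟨w2, hw2, h2⟩ := ihy
        refine ⟨w1 ⊔ w2, ?_, sup_le_sup h1 h2⟩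
        simpa using hpf.2.2.2 w1 w2 false false hw1 hw2
    | infUp x t _ _ ih =>
        obtain ⟨w1, hw1, h1⟩ := ih
        exact ⟨w1, hw1, le_trans inf_le_right h1⟩
  have disj : ∀ x, ClA f u x → UpTrue f x → False := by
    rintro x hx ⟨t, ht, htx⟩
    obtain ⟨w, hw, hxw⟩ := inv x hx
    exact no_true_le_false hpf ht hw (le_trans htx hxw)
  set g : L → Option Bool := fun x =>
    if ClA f u x then some false else if UpTrue f x then some true else none with hgdef
  have gA : ∀ x, ClA f u x → g x = some false := by
    intro x hx; simp only [hgdef, if_pos hx]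
  have gU : ∀ x, UpTrue f x → g x = some true := by
    intro x hx
    simp only [hgdef]
    rw [if_neg (fun hc => disj x hc hx), if_pos hx]
  have gval : ∀ x v, g x = some v →
      (v = false ∧ ClA f u x) ∨ (v = true ∧ UpTrue f x ∧ ¬ ClA f u x) := by
    intro x v hv
    by_cases hc : ClA f u x
    · left
      refine ⟨?_, hc⟩
      rw [gA x hc] at hv
      exact (Option.some_injective _ hv).symm
    · right
      simp only [hgdef, if_neg hc] at hv
      by_cases hu : UpTrue f x
      · rw [if_pos hu] at hv
        exact ⟨(Option.some_injective _ hv).symm, hu, hc⟩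
      · rw [if_neg hu] at hv; exact absurd hv (by simp)
  have ghom : IsPartialHom g := by
    refine ⟨gA ⊥ (ClA.base ⊥ hpf.1), gU ⊤ ⟨⊤, hpf.2.1, le_refl ⊤⟩, ?_, ?_⟩
    · intro x y vx vy hx hy
      rcases gval x vx hx with ⟨rfl, hcx⟩ | ⟨rfl, hux, hcx⟩ <;>
        rcases gval y vy hy with ⟨rfl, hcy⟩ | ⟨rfl, huy, hcy⟩
      · exact gA _ (ClA.inf x y hcx hcy)
      · have : ClA f u (y ⊓ x) := ClA.infUp x y huy hcx
        rw [inf_comm y x] at this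
        exact gA _ this
      · exact gA _ (ClA.infUp y x hux hcy)
      · obtain ⟨t1, ht1, h1⟩ := hux
        obtain ⟨t2, ht2, h2⟩ := huy
        refine gU _ ⟨t1 ⊓ t2, ?_, inf_le_inf h1 h2⟩
        simpa using hpf.2.2.1 t1 t2 true true ht1 ht2
    · intro x y vx vy hx hy
      rcases gval x vx hx with ⟨rfl, hcx⟩ | ⟨rfl, hux, hcx⟩ <;>
        rcases gval y vy hy with ⟨rfl, hcy⟩ | ⟨rfl, huy, hcy⟩
      · exact gA _ (ClA.sup x y hcx hcy)
      · obtain ⟨t2, ht2, h2⟩ := huy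
        exact gU _ ⟨t2, ht2, le_trans h2 le_sup_right⟩
      · obtain ⟨t1, ht1, h1⟩ := hux
        exact gU _ ⟨t1, ht1, le_trans h1 le_sup_left⟩
      · obtain ⟨t1, ht1, h1⟩ := hux
        exact gU _ ⟨t1, ht1, le_trans h1 le_sup_left⟩
  have gext : ∀ a v, f a = some v → g a = some v := by
    intro a v hv
    cases v with
    | false => exact gA a (ClA.base a hv)
    | true => exact gU a ⟨a, hv, le_refl a⟩
  have heq : g = f := hmax g ghom gext
  rw [← heq]
  exact gA u ClA.self

/-- Closure of `f⁻¹(1) ∪ {a}` under meets, joins, and joins with `f⁻¹(0)`. -/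
inductive ClB (f : L → Option Bool) (a : L) : L → Prop
  | base (x) : f x = some true → ClB f a x
  | self : ClB f a a
  | inf (x y) : ClB f a x → ClB f a y → ClB f a (x ⊓ y)
  | sup (x y) : ClB f a x → ClB f a y → ClB f a (x ⊔ y)
  | sup0 (x z) : f z = some false → ClB f a x → ClB f a (x ⊔ z)

end Aux

/-- The dual graph of a bounded lattice `L`: vertices are maximal partial homomorphisms
`f : L ⇀ 2` and `(f,g) ∈ E` iff `f⁻¹(1) ∩ g⁻¹(0) = ∅`. This graph satisfies (R)(i):
if `f⁻¹(1) ⊊ h⁻¹(1)` then `h⁻¹(1) ∩ f⁻¹(0) ≠ ∅`. -/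
theorem dual_graph_R_i {L : Type*} [Lattice L] [BoundedOrder L]
    (E : (L → Option Bool) → (L → Option Bool) → Prop)
    (hE : ∀ f g, E f g ↔ {a | f a = some true} ∩ {a | g a = some false} = ∅)
    (f h : L → Option Bool) (hf : IsMaximalPartialHom f) (hh : IsMaximalPartialHom h)
    (hsub : {a | f a = some true} ⊂ {a | h a = some true}) :
    ({a | h a = some true} ∩ {a | f a = some false}).Nonempty := by
  classical
  by_contra hne
  rw [Set.not_nonempty_iff_eq_empty] at hne
  have Hcon : ∀ x, h x = some true → f x ≠ some false := by
    intro x hx hfx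
    have hmem : x ∈ {a | h a = some true} ∩ {a | f a = some false} := ⟨hx, hfx⟩
    rw [hne] at hmem
    exact hmem
  obtain ⟨a, haH, haF⟩ := Set.exists_of_ssubset hsub
  have hsubset : {a | f a = some true} ⊆ {a | h a = some true} := hsub.1
  have hpf : IsPartialHom f := hf.1
  have hph : IsPartialHom h := hh.1
  -- every element of the closure has a lower bound in h⁻¹(1)
  have inv : ∀ x, ClB f a x → ∃ u, h u = some true ∧ u ≤ x := by
    intro x hx
    induction hx with
    | base x hx => exact ⟨x, hsubset hx, le_refl x⟩
    | self => exact ⟨a, haH, le_refl a⟩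
    | inf x y _ _ ihx ihy =>
        obtain ⟨u1, hu1, h1⟩ := ihx
        obtain ⟨u2, hu2, h2⟩ := ihy
        refine ⟨u1 ⊓ u2, ?_, inf_le_inf h1 h2⟩
        simpa using hph.2.2.1 u1 u2 true true hu1 hu2
    | sup x y _ _ ihx _ =>
        obtain ⟨u1, hu1, h1⟩ := ihx
        exact ⟨u1, hu1, le_trans h1 le_sup_left⟩
    | sup0 x z _ _ ihx =>
        obtain ⟨u1, hu1, h1⟩ := ihx
        exact ⟨u1, hu1, le_trans h1 le_sup_left⟩
  have notF0 : ∀ x, ClB f a x → f x ≠ some false := by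
    intro x hx hfx
    obtain ⟨u, hu, hux⟩ := inv x hx
    exact Hcon u hu (maximal_false_down hf hfx hux)
  set g : L → Option Bool := fun x => if ClB f a x then some true else f x with hgdef
  have gT : ∀ x, ClB f a x → g x = some true := by
    intro x hx; simp only [hgdef, if_pos hx]
  have gF : ∀ x, f x = some false → g x = some false := by
    intro x hx
    simp only [hgdef]
    rw [if_neg (fun hc => notF0 x hc hx)]
    exact hx
  have gval : ∀ x v, g x = some v →
      (v = true ∧ ClB f a x) ∨ (v = false ∧ f x = some false ∧ ¬ ClB f a x) := by
    intro x v hv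
    by_cases hc : ClB f a x
    · left
      refine ⟨?_, hc⟩
      rw [gT x hc] at hv
      exact (Option.some_injective _ hv).symm
    · simp only [hgdef, if_neg hc] at hv
      cases v with
      | false => exact Or.inr ⟨rfl, hv, hc⟩
      | true => exact absurd (ClB.base x hv) hc
  have ghom : IsPartialHom g := by
    refine ⟨gF ⊥ hpf.1, gT ⊤ (ClB.base ⊤ hpf.2.1), ?_, ?_⟩
    · intro x y vx vy hx hy
      rcases gval x vx hx with ⟨rfl, hcx⟩ | ⟨rfl, hfx, hcx⟩ <;>
        rcases gval y vy hy with ⟨rfl, hcy⟩ | ⟨rfl, hfy, hcy⟩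
      · exact gT _ (ClB.inf x y hcx hcy)
      · exact gF _ (maximal_false_down hf hfy inf_le_right)
      · exact gF _ (maximal_false_down hf hfx inf_le_left)
      · exact gF _ (by simpa using hpf.2.2.1 x y false false hfx hfy)
    · intro x y vx vy hx hy
      rcases gval x vx hx with ⟨rfl, hcx⟩ | ⟨rfl, hfx, hcx⟩ <;>
        rcases gval y vy hy with ⟨rfl, hcy⟩ | ⟨rfl, hfy, hcy⟩
      · exact gT _ (ClB.sup x y hcx hcy)
      · exact gT _ (ClB.sup0 x y hfy hcx)
      · have : ClB f a (y ⊔ x) := ClB.sup0 y x hfx hcy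
        rw [sup_comm y x] at this
        exact gT _ this
      · exact gF _ (by simpa using hpf.2.2.2 x y false false hfx hfy)
  have gext : ∀ b v, f b = some v → g b = some v := by
    intro b v hv
    cases v with
    | false => exact gF b hv
    | true => exact gT b (ClB.base b hv)
  have heq : g = f := hf.2 g ghom gext
  have hga : g a = some true := gT a ClB.self
  rw [heq] at hga
  exact haF hga
end

section
/- Let X = (X, E) be a TiRS graph. Define equivalence relations ∼₁ and ∼₂ on X by x ∼₁ y iff xE = yE and x ∼₂ y iff Ex = Ey, and define the frame ρ(X) = (X/∼₁, X/∼₂, R) by [x]₁ R [y]₂ iff (x,y) ∉ E. Then ρ(X) satisfies the separation condition (S) for frames: [x]₁ ≠ [x']₁ implies [x]₁R ≠ [x']₁R, and [y]₂ ≠ [y']₂ implies R[y]₂ ≠ R[y']₂. -/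
/-- A TiRS graph: a reflexive graph `(X, E)` satisfying the conditions (S), (R)(i),
(R)(ii) and (Ti). Here `xE = {z | E x z}` and `Ex = {z | E z x}`. -/
def IsTiRSGraph {X : Type*} (E : X → X → Prop) : Prop :=
  (∀ x, E x x) ∧
  (∀ x y, x ≠ y → {z | E x z} ≠ {z | E y z} ∨ {z | E z x} ≠ {z | E z y}) ∧
  (∀ x z, {w | E z w} ⊂ {w | E x w} → ¬ E z x) ∧
  (∀ y z, {w | E w z} ⊂ {w | E w y} → ¬ E y z) ∧
  (∀ x y, E x y → ∃ z, {w | E z w} ⊆ {w | E x w} ∧ {w | E w z} ⊆ {w | E w y})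

/-- The equivalence relation `∼₁` on a graph: `x ∼₁ y` iff `xE = yE`. -/
def s1 {X : Type*} (E : X → X → Prop) : Setoid X :=
  ⟨fun a b => {z | E a z} = {z | E b z}, ⟨fun _ => rfl, Eq.symm, Eq.trans⟩⟩

/-- The equivalence relation `∼₂` on a graph: `x ∼₂ y` iff `Ex = Ey`. -/
def s2 {X : Type*} (E : X → X → Prop) : Setoid X :=
  ⟨fun a b => {z | E z a} = {z | E z b}, ⟨fun _ => rfl, Eq.symm, Eq.trans⟩⟩

/-- The relation `R` of the frame `ρ(X)` associated to a graph `(X, E)`: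
`[x]₁ R [y]₂` iff `(x, y) ∉ E`. -/
def rhoR {X : Type*} (E : X → X → Prop) :
    Quotient (s1 E) → Quotient (s2 E) → Prop :=
  Quotient.lift₂ (fun a b => ¬ E a b)
    (fun a b a' b' h1 h2 => by
      have e1 : E a b ↔ E a' b := by
        have := Set.ext_iff.mp h1 b; simpa [s1] using this
      have e2 : E a' b ↔ E a' b' := by
        have := Set.ext_iff.mp h2 a'; simpa [s2] using this
      simp [e1, e2])
/-- Condition (S) for a frame `(X₁, X₂, R)`. -/
def FrameS {X₁ X₂ : Type*} (R : X₁ → X₂ → Prop) : Prop :=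
  (∀ x x', x ≠ x' → {y | R x y} ≠ {y | R x' y}) ∧
  (∀ y y', y ≠ y' → {x | R x y} ≠ {x | R x y'})

/-- Condition (R) for a frame `(X₁, X₂, R)`. -/
def FrameR {X₁ X₂ : Type*} (R : X₁ → X₂ → Prop) : Prop :=
  (∀ x, ∃ y, ¬ R x y ∧ ∀ w, w ≠ x → {b | R x b} ⊆ {b | R w b} → R w y) ∧
  (∀ y, ∃ x, ¬ R x y ∧ ∀ z, z ≠ y → {a | R a y} ⊆ {a | R a z} → R x z)

/-- Condition (Ti) for a frame `(X₁, X₂, R)`. -/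
def FrameTi {X₁ X₂ : Type*} (R : X₁ → X₂ → Prop) : Prop :=
  ∀ x y, ¬ R x y → ∃ w z, ¬ R w z ∧
    {b | R x b} ⊆ {b | R w b} ∧ {a | R a y} ⊆ {a | R a z} ∧
    (∀ u, u ≠ w → {b | R w b} ⊆ {b | R u b} → R u z) ∧
    (∀ v, v ≠ z → {a | R a z} ⊆ {a | R a v} → R w v)

/-- A TiRS frame: a frame satisfying (S), (R) and (Ti). -/
def IsTiRSFrame {X₁ X₂ : Type*} (R : X₁ → X₂ → Prop) : Prop :=
  FrameS R ∧ FrameR R ∧ FrameTi R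

/-- The vertex set `H` of the graph `gr(F)` associated to a frame `F = (X₁, X₂, R)`. -/
def grH {X₁ X₂ : Type*} (R : X₁ → X₂ → Prop) : Set (X₁ × X₂) :=
  {p | ¬ R p.1 p.2 ∧
    (∀ u, u ≠ p.1 → {b | R p.1 b} ⊆ {b | R u b} → R u p.2) ∧
    (∀ v, v ≠ p.2 → {a | R a p.2} ⊆ {a | R a v} → R p.1 v)}

/-- The edge relation `K` of the graph `gr(F)`: `((x,y),(w,z)) ∈ K` iff `¬(xRz)`. -/
def grK {X₁ X₂ : Type*} (R : X₁ → X₂ → Prop) (p q : grH R) : Prop :=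
  ¬ R (p : X₁ × X₂).1 (q : X₁ × X₂).2

/-- The frame `ρ(X)` associated to a TiRS graph `X = (X, E)` satisfies the
separation condition (S). -/
theorem rho_satisfies_S {X : Type*} (E : X → X → Prop) (hX : IsTiRSGraph E)
    (R : Quotient (s1 E) → Quotient (s2 E) → Prop)
    (hR : ∀ x y, R (Quotient.mk (s1 E) x) (Quotient.mk (s2 E) y) ↔ ¬ E x y) :
    FrameS R := by
  constructor
  · intro x x' hne heq
    induction x using Quotient.ind with | _ a =>
    induction x' using Quotient.ind with | _ a' =>
    apply hne
    apply Quotient.sound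
    show {z | E a z} = {z | E a' z}
    ext z
    have h := Set.ext_iff.mp heq (Quotient.mk (s2 E) z)
    simp only [Set.mem_setOf_eq, hR] at h
    simp only [Set.mem_setOf_eq]
    tauto
  · intro y y' hne heq
    induction y using Quotient.ind with | _ b =>
    induction y' using Quotient.ind with | _ b' =>
    apply hne
    apply Quotient.sound
    show {z | E z b} = {z | E z b'}
    ext z
    have h := Set.ext_iff.mp heq (Quotient.mk (s1 E) z)
    simp only [Set.mem_setOf_eq, hR] at h
    simp only [Set.mem_setOf_eq]
    tauto
end

section
/- Let X = (X, E) be a TiRS graph and let ρ(X) = (X/∼₁, X/∼₂, R) be its associated frame with [x]₁ R [y]₂ iff (x,y) ∉ E. Then ρ(X) satisfies the (Ti) condition for frames: whenever ¬([x]₁ R [y]₂), there exist w ∈ X/∼₁ and z ∈ X/∼₂ such that ¬(w R z), [x]₁R ⊆ wR, R[y]₂ ⊆ Rz, every u ≠ w with wR ⊆ uR satisfies uRz, and every v ≠ z with Rz ⊆ Rv satisfies wRv. -/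
/-- The frame `ρ(X)` associated to a TiRS graph `X = (X, E)` satisfies the (Ti)
condition for frames. -/
theorem rho_satisfies_Ti {X : Type*} (E : X → X → Prop) (hX : IsTiRSGraph E)
    (R : Quotient (s1 E) → Quotient (s2 E) → Prop)
    (hR : ∀ x y, R (Quotient.mk (s1 E) x) (Quotient.mk (s2 E) y) ↔ ¬ E x y) :
    FrameTi R := by
  obtain ⟨hrefl, hS, hR1, hR2, hTi⟩ := hX
  intro x y hxy
  obtain ⟨a, rfl⟩ := Quotient.exists_rep x
  obtain ⟨b, rfl⟩ := Quotient.exists_rep y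
  have hab : E a b := by by_contra h; exact hxy ((hR a b).mpr h)
  obtain ⟨z, hz1, hz2⟩ := hTi a b hab
  refine ⟨Quotient.mk (s1 E) z, Quotient.mk (s2 E) z, (hR z z).not.mpr (not_not_intro (hrefl z)), ?_, ?_, ?_, ?_⟩
  · intro β hβ
    obtain ⟨c, rfl⟩ := Quotient.exists_rep β
    simp only [Set.mem_setOf_eq, hR] at hβ ⊢
    exact fun h => hβ (hz1 h)
  · intro α hα
    obtain ⟨c, rfl⟩ := Quotient.exists_rep α
    simp only [Set.mem_setOf_eq, hR] at hα ⊢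
    exact fun h => hα (hz2 h)
  · intro u hu hsub
    obtain ⟨u', rfl⟩ := Quotient.exists_rep u
    rw [hR]
    have hsub' : {w | E u' w} ⊆ {w | E z w} := by
      intro c hc
      by_contra hzc
      have : R (Quotient.mk (s1 E) z) (Quotient.mk (s2 E) c) := (hR z c).mpr hzc
      exact (hR u' c).mp (hsub this) hc
    have hne : {w | E u' w} ≠ {w | E z w} := by
      intro h
      exact hu (Quotient.sound h)
    exact hR1 z u' ⟨hsub', fun h => hne (le_antisymm hsub' h)⟩
  · intro v hv hsub
    obtain ⟨v', rfl⟩ := Quotient.exists_rep v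
    rw [hR]
    have hsub' : {w | E w v'} ⊆ {w | E w z} := by
      intro c hc
      by_contra hcz
      have : R (Quotient.mk (s1 E) c) (Quotient.mk (s2 E) z) := (hR c z).mpr hcz
      exact (hR c v').mp (hsub this) hc
    have hne : {w | E w v'} ≠ {w | E w z} := by
      intro h
      exact hv (Quotient.sound h)
    exact hR2 z v' ⟨hsub', fun h => hne (le_antisymm hsub' h)⟩
end

section
/- Let F = (X₁, X₂, R) be a TiRS frame with associated graph gr(F) = (H, K). Then gr(F) satisfies the separation condition (S) for graphs: if (x,y) and (w,z) are distinct elements of H, then their K-successor sets or K-predecessor sets differ, i.e. (x,y)K ≠ (w,z)K or K(x,y) ≠ K(w,z). -/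
/-- The graph `gr(F)` associated to a TiRS frame `F` satisfies the separation
condition (S): distinct vertices have different `K`-successor sets or different
`K`-predecessor sets. -/
theorem gr_satisfies_S {X₁ X₂ : Type*} (R : X₁ → X₂ → Prop) (hF : IsTiRSFrame R) :
    ∀ p q : grH R, p ≠ q →
      {r | grK R p r} ≠ {r | grK R q r} ∨ {r | grK R r p} ≠ {r | grK R r q} := by
  obtain ⟨hS, _, hTi⟩ := hF
  -- auxiliary: from x R b, ¬ w R b, produce a vertex r with ¬ R w r.2 ∧ R x r.2
  have aux1 : ∀ x w b, R x b → ¬ R w b → ∃ r : grH R, ¬ R r.val.1 r.val.2 ∧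
      ¬ R w r.val.2 ∧ R x r.val.2 := by
    intro x w b hx hw
    obtain ⟨w', b', hnb, hsub1, hsub2, hmax1, hmax2⟩ := hTi w b hw
    exact ⟨⟨(w', b'), hnb, hmax1, hmax2⟩, hnb, fun h => hnb (hsub1 h), hsub2 hx⟩
  have aux2 : ∀ y z a, R a y → ¬ R a z → ∃ r : grH R, ¬ R r.val.1 r.val.2 ∧
      ¬ R r.val.1 z ∧ R r.val.1 y := by
    intro y z a hy hz
    obtain ⟨a', z', hnb, hsub1, hsub2, hmax1, hmax2⟩ := hTi a z hz
    exact ⟨⟨(a', z'), hnb, hmax1, hmax2⟩, hnb, fun h => hnb (hsub2 h), hsub1 hy⟩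
  rintro ⟨⟨x, y⟩, hp⟩ ⟨⟨w, z⟩, hq⟩ hne
  have hne' : x ≠ w ∨ y ≠ z := by
    by_contra h
    push_neg at h
    exact hne (Subtype.ext (Prod.ext h.1 h.2))
  rcases hne' with hxw | hyz
  · left
    have hsets := hS.1 x w hxw
    have : ∃ b, (R x b ∧ ¬ R w b) ∨ (R w b ∧ ¬ R x b) := by
      by_contra h
      push_neg at h
      exact hsets (Set.ext fun b => ⟨(h b).1,
        (h b).2⟩)
    obtain ⟨b, hb⟩ := this
    rcases hb with ⟨hx, hw⟩ | ⟨hw, hx⟩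
    · obtain ⟨r, _, hrw, hrx⟩ := aux1 x w b hx hw
      intro hEq
      have : r ∈ {r | grK R ⟨(w, z), hq⟩ r} := hrw
      rw [← hEq] at this
      exact this hrx
    · obtain ⟨r, _, hrx, hrw⟩ := aux1 w x b hw hx
      intro hEq
      have : r ∈ {r | grK R ⟨(x, y), hp⟩ r} := hrx
      rw [hEq] at this
      exact this hrw
  · right
    have hsets := hS.2 y z hyz
    have : ∃ a, (R a y ∧ ¬ R a z) ∨ (R a z ∧ ¬ R a y) := by
      by_contra h
      push_neg at h
      exact hsets (Set.ext fun a => ⟨(h a).1,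
        (h a).2⟩)
    obtain ⟨a, ha⟩ := this
    rcases ha with ⟨hy, hz⟩ | ⟨hz, hy⟩
    · obtain ⟨r, _, hrz, hry⟩ := aux2 y z a hy hz
      intro hEq
      have : r ∈ {r | grK R r ⟨(w, z), hq⟩} := hrz
      rw [← hEq] at this
      exact this hry
    · obtain ⟨r, _, hry, hrz⟩ := aux2 z y a hz hy
      intro hEq
      have : r ∈ {r | grK R r ⟨(x, y), hp⟩} := hry
      rw [hEq] at this
      exact this hrz
end

section
/- Let X = (X, E) be a TiRS graph, ρ(X) its associated TiRS frame, and gr(ρ(X)) the graph associated to ρ(X). Then the map α : X → gr(ρ(X)) defined by α(x) = ([x]₁, [x]₂) is a graph isomorphism: it is a bijection onto the vertex set of gr(ρ(X)), and (x₁, x₂) ∈ E iff (α(x₁), α(x₂)) is an edge of gr(ρ(X)). -/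
/-- For a TiRS graph `X = (X, E)`, the map `α(x) = ([x]₁, [x]₂)` is a graph
isomorphism from `X` onto the graph `gr(ρ(X))` associated to the frame `ρ(X)`:
it is a bijection onto the vertex set `H` of `gr(ρ(X))`, and `(x₁, x₂) ∈ E` iff
`(α(x₁), α(x₂))` is an edge of `gr(ρ(X))`, i.e. iff `¬ rhoR E [x₁]₁ [x₂]₂`. -/
theorem alpha_graph_isomorphism {X : Type*} (E : X → X → Prop) (hX : IsTiRSGraph E) :
    Set.BijOn (fun x => (Quotient.mk (s1 E) x, Quotient.mk (s2 E) x)) Set.univ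
      (grH (rhoR E)) ∧
    ∀ x₁ x₂, E x₁ x₂ ↔ ¬ rhoR E (Quotient.mk (s1 E) x₁) (Quotient.mk (s2 E) x₂) := by
  obtain ⟨hrefl, hS, hR1, hR2, hTi⟩ := hX
  have key : ∀ a b : X, rhoR E (Quotient.mk (s1 E) a) (Quotient.mk (s2 E) b) ↔ ¬ E a b :=
    fun a b => Iff.rfl
  constructor
  · refine ⟨?_, ?_, ?_⟩
    · intro x _
      refine ⟨fun h => h (hrefl x), ?_, ?_⟩
      · intro u hu hsub
        induction u using Quotient.ind with
        | _ u' =>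
          have hsub2 : {b | rhoR E (Quotient.mk (s1 E) x) b} ⊆
              {b | rhoR E (Quotient.mk (s1 E) u') b} := hsub
          have hsubE : {z | E u' z} ⊆ {z | E x z} := by
            intro b hb
            by_contra hxb
            have hmem : Quotient.mk (s2 E) b ∈ {b | rhoR E (Quotient.mk (s1 E) x) b} := hxb
            exact hsub2 hmem hb
          have hne : {z | E u' z} ≠ {z | E x z} := fun h => hu (Quotient.sound h)
          exact (key u' x).mpr (hR1 x u' ⟨hsubE, fun h => hne (Set.Subset.antisymm hsubE h)⟩)
      · intro v hv hsub
        induction v using Quotient.ind with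
        | _ v' =>
          have hsub2 : {a | rhoR E a (Quotient.mk (s2 E) x)} ⊆
              {a | rhoR E a (Quotient.mk (s2 E) v')} := hsub
          have hsubE : {z | E z v'} ⊆ {z | E z x} := by
            intro a ha
            by_contra hxa
            have hmem : Quotient.mk (s1 E) a ∈ {a | rhoR E a (Quotient.mk (s2 E) x)} := hxa
            exact hsub2 hmem ha
          have hne : {z | E z v'} ≠ {z | E z x} := fun h => hv (Quotient.sound h)
          exact (key x v').mpr (hR2 x v' ⟨hsubE, fun h => hne (Set.Subset.antisymm hsubE h)⟩)
    · intro a _ b _ hab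
      by_contra hne
      rcases hS a b hne with h | h
      · exact h (Quotient.exact (congrArg Prod.fst hab))
      · exact h (Quotient.exact (congrArg Prod.snd hab))
    · intro p hp
      obtain ⟨x, hx⟩ := Quotient.exists_rep p.1
      obtain ⟨y, hy⟩ := Quotient.exists_rep p.2
      obtain ⟨hp1, hp2, hp3⟩ := hp
      have hExy : E x y := by
        by_contra h
        rw [← hx, ← hy] at hp1
        exact hp1 h
      obtain ⟨z, hz1, hz2⟩ := hTi x y hExy
      have hEzy : E z y := hz2 (hrefl z)
      have hExz : E x z := hz1 (hrefl z)
      have he1 : {w | E z w} = {w | E x w} := by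
        by_contra hne
        have hu : Quotient.mk (s1 E) z ≠ p.1 := by
          rw [← hx]; intro h; exact hne (Quotient.exact h)
        have hsub : {b | rhoR E p.1 b} ⊆ {b | rhoR E (Quotient.mk (s1 E) z) b} := by
          rw [← hx]
          intro b hb
          induction b using Quotient.ind with
          | _ b' =>
            intro hzb
            exact hb (hz1 hzb)
        have := hp2 _ hu hsub
        rw [← hy] at this
        exact this hEzy
      have he2 : {w | E w z} = {w | E w y} := by
        by_contra hne
        have hv : Quotient.mk (s2 E) z ≠ p.2 := by
          rw [← hy]; intro h; exact hne (Quotient.exact h)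
        have hsub : {a | rhoR E a p.2} ⊆ {a | rhoR E a (Quotient.mk (s2 E) z)} := by
          rw [← hy]
          intro a ha
          induction a using Quotient.ind with
          | _ a' =>
            intro haz
            exact ha (hz2 haz)
        have := hp3 _ hv hsub
        rw [← hx] at this
        exact this hExz
      refine ⟨z, Set.mem_univ z, ?_⟩
      have h1 : Quotient.mk (s1 E) z = p.1 := by rw [← hx]; exact Quotient.sound he1
      have h2 : Quotient.mk (s2 E) z = p.2 := by rw [← hy]; exact Quotient.sound he2
      simp [h1, h2]
  · intro x₁ x₂
    rw [key]
    exact not_not.symm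
end

section
/- Let F = (X₁, X₂, R) be a TiRS frame. Then the pair of maps β₁ : X₁ → H/∼₁ and β₂ : X₂ → H/∼₂ given by β₁(x) = [(x,y)]₁ for any y with (x,y) ∈ H, and β₂(y) = [(x,y)]₂ for any x with (x,y) ∈ H, is a well-defined frame isomorphism from F to ρ(gr(F)). -/
/-- For a TiRS frame `F = (X₁, X₂, R)`, the pair of maps `β₁ : X₁ → H/∼₁`,
`β₂ : X₂ → H/∼₂` given by `β₁(x) = [(x,y)]₁` for any `y` with `(x,y) ∈ H` and
`β₂(y) = [(x,y)]₂` for any `x` with `(x,y) ∈ H` is a well-defined frame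
isomorphism from `F` to `ρ(gr(F))`. -/
theorem beta_frame_isomorphism {X₁ X₂ : Type*} (R : X₁ → X₂ → Prop)
    (hF : IsTiRSFrame R) :
    ∃ (β₁ : X₁ → Quotient (s1 (grK R))) (β₂ : X₂ → Quotient (s2 (grK R))),
      (∀ (x : X₁) (y : X₂) (h : (x, y) ∈ grH R),
        β₁ x = Quotient.mk (s1 (grK R)) ⟨(x, y), h⟩ ∧
        β₂ y = Quotient.mk (s2 (grK R)) ⟨(x, y), h⟩) ∧
      Function.Bijective β₁ ∧ Function.Bijective β₂ ∧
      ∀ x y, R x y ↔ rhoR (grK R) (β₁ x) (β₂ y) := by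
  classical
  obtain ⟨hS, hR, hTi⟩ := hF
  -- every x extends to a member of H
  have ex1 : ∀ x : X₁, ∃ y, (x, y) ∈ grH R := by
    intro x
    obtain ⟨y, hxy, hw⟩ := hR.1 x
    obtain ⟨w, z, hwz, hsub1, hsub2, hc1, hc2⟩ := hTi x y hxy
    have hwx : w = x := by
      by_contra hne
      exact hwz (hsub2 (hw w hne hsub1))
    subst hwx
    exact ⟨z, hwz, hc1, hc2⟩
  have ex2 : ∀ y : X₂, ∃ x, (x, y) ∈ grH R := by
    intro y
    obtain ⟨x, hxy, hv⟩ := hR.2 y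
    obtain ⟨w, z, hwz, hsub1, hsub2, hc1, hc2⟩ := hTi x y hxy
    have hzy : z = y := by
      by_contra hne
      exact hwz (hsub1 (hv z hne hsub2))
    subst hzy
    exact ⟨w, hwz, hc1, hc2⟩
  -- equal first coordinates give the same ∼₁-class
  have key1 : ∀ (p q : grH R), (p : X₁ × X₂).1 = (q : X₁ × X₂).1 →
      Quotient.mk (s1 (grK R)) p = Quotient.mk (s1 (grK R)) q := by
    intro p q h
    apply Quotient.sound
    show {z | grK R p z} = {z | grK R q z}
    ext z
    simp [grK, h]
  have key2 : ∀ (p q : grH R), (p : X₁ × X₂).2 = (q : X₁ × X₂).2 →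
      Quotient.mk (s2 (grK R)) p = Quotient.mk (s2 (grK R)) q := by
    intro p q h
    apply Quotient.sound
    show {z | grK R z p} = {z | grK R z q}
    ext z
    simp [grK, h]
  -- separation lemmas
  have sep1 : ∀ a a' : X₁, (∃ y, ¬ R a y ∧ R a' y) →
      ∃ q : grH R, ¬ R a (q : X₁ × X₂).2 ∧ R a' (q : X₁ × X₂).2 := by
    rintro a a' ⟨y, hay, ha'y⟩
    obtain ⟨w, z, hwz, hsub1, hsub2, hc1, hc2⟩ := hTi a y hay
    refine ⟨⟨(w, z), hwz, hc1, hc2⟩, ?_, hsub2 ha'y⟩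
    intro haz
    exact hwz (hsub1 haz)
  have sep2 : ∀ b b' : X₂, (∃ x, ¬ R x b ∧ R x b') →
      ∃ q : grH R, ¬ R (q : X₁ × X₂).1 b ∧ R (q : X₁ × X₂).1 b' := by
    rintro b b' ⟨x, hxb, hxb'⟩
    obtain ⟨w, z, hwz, hsub1, hsub2, hc1, hc2⟩ := hTi x b hxb
    refine ⟨⟨(w, z), hwz, hc1, hc2⟩, ?_, hsub1 hxb'⟩
    intro hwb
    exact hwz (hsub2 hwb)
  choose f hf using ex1
  choose g hg using ex2
  refine ⟨fun x => Quotient.mk (s1 (grK R)) ⟨(x, f x), hf x⟩,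
          fun y => Quotient.mk (s2 (grK R)) ⟨(g y, y), hg y⟩, ?_, ⟨?_, ?_⟩, ⟨?_, ?_⟩, ?_⟩
  · intro x y h
    exact ⟨key1 _ _ rfl, key2 _ _ rfl⟩
  · -- injectivity of β₁
    intro x x' h
    by_contra hne
    have hE := Quotient.exact h
    have hE' : {z : grH R | grK R ⟨(x, f x), hf x⟩ z} =
        {z : grH R | grK R ⟨(x', f x'), hf x'⟩ z} := hE
    have hneq := hS.1 x x' hne
    have : ∃ y, ¬ (R x y ↔ R x' y) := by
      by_contra hc
      push_neg at hc
      exact hneq (Set.ext fun y => hc y)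
    obtain ⟨y, hy⟩ := this
    rcases Classical.em (R x y) with hxy | hxy
    · have hx'y : ¬ R x' y := fun h' => hy ⟨fun _ => h', fun _ => hxy⟩
      obtain ⟨q, hq1, hq2⟩ := sep1 x' x ⟨y, hx'y, hxy⟩
      have : q ∈ {z : grH R | grK R ⟨(x', f x'), hf x'⟩ z} := hq1
      rw [← hE'] at this
      exact this hq2
    · have hx'y : R x' y := by
        by_contra h'
        exact hy ⟨fun h'' => absurd h'' hxy, fun h'' => absurd h'' h'⟩
      obtain ⟨q, hq1, hq2⟩ := sep1 x x' ⟨y, hxy, hx'y⟩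
      have : q ∈ {z : grH R | grK R ⟨(x, f x), hf x⟩ z} := hq1
      rw [hE'] at this
      exact this hq2
  · -- surjectivity of β₁
    intro c
    induction c using Quotient.ind with
    | _ p =>
      exact ⟨(p : X₁ × X₂).1, key1 ⟨((p : X₁ × X₂).1, f (p : X₁ × X₂).1), hf _⟩ p rfl⟩
  · -- injectivity of β₂
    intro y y' h
    by_contra hne
    have hE := Quotient.exact h
    have hE' : {z : grH R | grK R z ⟨(g y, y), hg y⟩} =
        {z : grH R | grK R z ⟨(g y', y'), hg y'⟩} := hE
    have hneq := hS.2 y y' hne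
    have : ∃ x, ¬ (R x y ↔ R x y') := by
      by_contra hc
      push_neg at hc
      exact hneq (Set.ext fun x => hc x)
    obtain ⟨x, hx⟩ := this
    rcases Classical.em (R x y) with hxy | hxy
    · have hxy' : ¬ R x y' := fun h' => hx ⟨fun _ => h', fun _ => hxy⟩
      obtain ⟨q, hq1, hq2⟩ := sep2 y' y ⟨x, hxy', hxy⟩
      have : q ∈ {z : grH R | grK R z ⟨(g y', y'), hg y'⟩} := hq1
      rw [← hE'] at this
      exact this hq2
    · have hxy' : R x y' := by
        by_contra h'
        exact hx ⟨fun h'' => absurd h'' hxy, fun h'' => absurd h'' h'⟩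
      obtain ⟨q, hq1, hq2⟩ := sep2 y y' ⟨x, hxy, hxy'⟩
      have : q ∈ {z : grH R | grK R z ⟨(g y, y), hg y⟩} := hq1
      rw [hE'] at this
      exact this hq2
  · -- surjectivity of β₂
    intro c
    induction c using Quotient.ind with
    | _ p =>
      exact ⟨(p : X₁ × X₂).2, key2 ⟨(g (p : X₁ × X₂).2, (p : X₁ × X₂).2), hg _⟩ p rfl⟩
  · -- β preserves the relation
    intro x y
    show R x y ↔ ¬ grK R ⟨(x, f x), hf x⟩ ⟨(g y, y), hg y⟩
    show R x y ↔ ¬ ¬ R x y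
    exact not_not.symm
end

section
/- Let X = (X, E_X) and Y = (Y, E_Y) be TiRS graphs and φ : X → Y a TiRS graph morphism. Then the induced pair ρ(φ) = (ρ(φ)₁, ρ(φ)₂), where ρ(φ)₁([x]₁) = [φ(x)]₁ and ρ(φ)₂([x]₂) = [φ(x)]₂, consists of well-defined maps and is a TiRS frame morphism from ρ(X) to ρ(Y). -/
/-- A TiRS graph morphism `φ : (X, E_X) → (Y, E_Y)`. -/
def IsTiRSGraphMorphism {X Y : Type*} (EX : X → X → Prop) (EY : Y → Y → Prop)
    (φ : X → Y) : Prop :=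
  (∀ x₁ x₂, EX x₁ x₂ → EY (φ x₁) (φ x₂)) ∧
  (∀ x₁ x₂, {z | EX x₁ z} ⊆ {z | EX x₂ z} → {z | EY (φ x₁) z} ⊆ {z | EY (φ x₂) z}) ∧
  (∀ x₁ x₂, {z | EX z x₁} ⊆ {z | EX z x₂} → {z | EY z (φ x₁)} ⊆ {z | EY z (φ x₂)})

/-- A TiRS frame morphism `ψ = (ψ₁, ψ₂) : (X₁, X₂, R_F) → (Y₁, Y₂, R_G)`. -/
def IsTiRSFrameMorphism {X₁ X₂ Y₁ Y₂ : Type*} (RF : X₁ → X₂ → Prop)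
    (RG : Y₁ → Y₂ → Prop) (ψ₁ : X₁ → Y₁) (ψ₂ : X₂ → Y₂) : Prop :=
  (∀ x y, RG (ψ₁ x) (ψ₂ y) → RF x y) ∧
  (∀ x w, {b | RF x b} ⊆ {b | RF w b} → {b | RG (ψ₁ x) b} ⊆ {b | RG (ψ₁ w) b}) ∧
  (∀ y z, {a | RF a y} ⊆ {a | RF a z} → {a | RG a (ψ₂ y)} ⊆ {a | RG a (ψ₂ z)}) ∧
  (∀ x y, (x, y) ∈ grH RF → (ψ₁ x, ψ₂ y) ∈ grH RG)


lemma rhoR_mk {X : Type*} (E : X → X → Prop) (a b : X) :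
    rhoR E (Quotient.mk (s1 E) a) (Quotient.mk (s2 E) b) ↔ ¬ E a b := Iff.rfl

lemma grH_mk {X : Type*} (E : X → X → Prop) (hE : IsTiRSGraph E) (x : X) :
    (Quotient.mk (s1 E) x, Quotient.mk (s2 E) x) ∈ grH (rhoR E) := by
  obtain ⟨hrefl, _, hR1, hR2, _⟩ := hE
  refine ⟨?_, ?_, ?_⟩
  · show ¬ ¬ E x x
    exact fun h => h (hrefl x)
  · intro u hu hsub
    induction u using Quotient.ind with
    | _ w =>
      have hwx : {z | E w z} ⊆ {z | E x z} := by
        intro z hz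
        by_contra hxz
        have hm := hsub (a := Quotient.mk (s2 E) z) ((rhoR_mk E x z).mpr hxz)
        exact (rhoR_mk E w z).mp hm hz
      show ¬ E w x
      exact hR1 x w (ssubset_of_subset_of_ne hwx
        (fun heq => hu (Quotient.sound heq)))
  · intro v hv hsub
    induction v using Quotient.ind with
    | _ z =>
      have hzx : {a | E a z} ⊆ {a | E a x} := by
        intro a ha
        by_contra hax
        have hm := hsub (a := Quotient.mk (s1 E) a) ((rhoR_mk E a x).mpr hax)
        exact (rhoR_mk E a z).mp hm ha
      show ¬ E x z
      exact hR2 x z (ssubset_of_subset_of_ne hzx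
        (fun heq => hv (Quotient.sound heq)))

lemma grH_rep {X : Type*} (E : X → X → Prop) (hE : IsTiRSGraph E)
    {a : Quotient (s1 E)} {b : Quotient (s2 E)} (h : (a, b) ∈ grH (rhoR E)) :
    ∃ x, a = Quotient.mk (s1 E) x ∧ b = Quotient.mk (s2 E) x := by
  obtain ⟨x, rfl⟩ := Quotient.exists_rep a
  obtain ⟨y, rfl⟩ := Quotient.exists_rep b
  obtain ⟨h1, h2, h3⟩ := h
  have hxy : E x y := not_not.mp h1
  obtain ⟨z, hz1, hz2⟩ := hE.2.2.2.2 x y hxy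
  have haz : (Quotient.mk (s1 E) x : Quotient (s1 E)) = Quotient.mk (s1 E) z := by
    by_contra hne
    have : ¬ E z y := h2 (Quotient.mk (s1 E) z) (fun h => hne h.symm)
      (by
        intro c hc
        induction c using Quotient.ind with
        | _ w =>
          show ¬ E z w
          exact fun hzw => hc (hz1 hzw))
    exact this (hz2 (hE.1 z))
  have hbz : (Quotient.mk (s2 E) y : Quotient (s2 E)) = Quotient.mk (s2 E) z := by
    by_contra hne
    have : ¬ E x z := h3 (Quotient.mk (s2 E) z) (fun h => hne h.symm)
      (by
        intro c hc
        induction c using Quotient.ind with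
        | _ w =>
          show ¬ E w z
          exact fun hwz => hc (hz2 hwz))
    exact this (hz1 (hE.1 z))
  exact ⟨z, haz, hbz⟩

/-- If `φ : X → Y` is a TiRS graph morphism between TiRS graphs, then the induced
pair `ρ(φ) = (ρ(φ)₁, ρ(φ)₂)` with `ρ(φ)₁([x]₁) = [φ(x)]₁` and
`ρ(φ)₂([x]₂) = [φ(x)]₂` consists of well-defined maps and is a TiRS frame morphism
from `ρ(X)` to `ρ(Y)`. -/
theorem rho_of_morphism {X Y : Type*} (EX : X → X → Prop) (EY : Y → Y → Prop)
    (hX : IsTiRSGraph EX) (hY : IsTiRSGraph EY) (φ : X → Y)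
    (hφ : IsTiRSGraphMorphism EX EY φ) :
    ∃ (ψ₁ : Quotient (s1 EX) → Quotient (s1 EY))
      (ψ₂ : Quotient (s2 EX) → Quotient (s2 EY)),
      (∀ x, ψ₁ (Quotient.mk (s1 EX) x) = Quotient.mk (s1 EY) (φ x)) ∧
      (∀ x, ψ₂ (Quotient.mk (s2 EX) x) = Quotient.mk (s2 EY) (φ x)) ∧
      IsTiRSFrameMorphism (rhoR EX) (rhoR EY) ψ₁ ψ₂ := by
  obtain ⟨hm1, hm2, hm3⟩ := hφ
  refine ⟨Quotient.lift (fun x => Quotient.mk (s1 EY) (φ x)) ?_,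
          Quotient.lift (fun x => Quotient.mk (s2 EY) (φ x)) ?_,
          fun x => rfl, fun x => rfl, ?_, ?_, ?_, ?_⟩
  · intro a b h
    exact Quotient.sound (subset_antisymm (hm2 a b h.subset) (hm2 b a h.symm.subset))
  · intro a b h
    exact Quotient.sound (subset_antisymm (hm3 a b h.subset) (hm3 b a h.symm.subset))
  · intro x y
    induction x using Quotient.ind with
    | _ a =>
      induction y using Quotient.ind with
      | _ b =>
        intro h
        show ¬ EX a b
        intro hab
        exact h (hm1 a b hab)
  · intro x w hsub
    induction x using Quotient.ind with
    | _ a =>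
      induction w using Quotient.ind with
      | _ c =>
        have hca : {z | EX c z} ⊆ {z | EX a z} := by
          intro z hz
          by_contra haz
          exact hsub (a := Quotient.mk (s2 EX) z) haz hz
        have h2 := hm2 c a hca
        intro b hb
        induction b using Quotient.ind with
        | _ y =>
          show ¬ EY (φ c) y
          exact fun hcy => hb (h2 hcy)
  · intro y z hsub
    induction y using Quotient.ind with
    | _ a =>
      induction z using Quotient.ind with
      | _ c =>
        have hca : {w | EX w c} ⊆ {w | EX w a} := by
          intro w hw
          by_contra haw
          exact hsub (a := Quotient.mk (s1 EX) w) haw hw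
        have h3 := hm3 c a hca
        intro b hb
        induction b using Quotient.ind with
        | _ v =>
          show ¬ EY v (φ c)
          exact fun hvc => hb (h3 hvc)
  · intro x y h
    obtain ⟨z, rfl, rfl⟩ := grH_rep EX hX h
    exact grH_mk EY hY (φ z)
end

section
/- Let F = (X₁, X₂, R_F) and G = (Y₁, Y₂, R_G) be TiRS frames and ψ = (ψ₁, ψ₂) : F → G a TiRS frame morphism. Then the map gr(ψ) : gr(F) → gr(G) defined by gr(ψ)(x,y) = (ψ₁(x), ψ₂(y)) is well-defined (maps H_F into H_G) and is a TiRS graph morphism. -/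
/-- If `ψ = (ψ₁, ψ₂) : F → G` is a TiRS frame morphism between TiRS frames, then
the map `gr(ψ)(x, y) = (ψ₁(x), ψ₂(y))` is a well-defined map from `H_F` to `H_G`
and is a TiRS graph morphism from `gr(F)` to `gr(G)`. -/
theorem gr_of_morphism {X₁ X₂ Y₁ Y₂ : Type*} (RF : X₁ → X₂ → Prop)
    (RG : Y₁ → Y₂ → Prop) (hF : IsTiRSFrame RF) (hG : IsTiRSFrame RG)
    (ψ₁ : X₁ → Y₁) (ψ₂ : X₂ → Y₂) (hψ : IsTiRSFrameMorphism RF RG ψ₁ ψ₂) :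
    ∃ g : grH RF → grH RG,
      (∀ p : grH RF, (g p : Y₁ × Y₂) = (ψ₁ (p : X₁ × X₂).1, ψ₂ (p : X₁ × X₂).2)) ∧
      IsTiRSGraphMorphism (grK RF) (grK RG) g := by
  obtain ⟨h1, h2, h3, h4⟩ := hψ
  refine ⟨fun p => ⟨(ψ₁ (p : X₁ × X₂).1, ψ₂ (p : X₁ × X₂).2),
    h4 _ _ (by simpa using p.2)⟩, fun p => rfl, ?_, ?_, ?_⟩
  · intro p q hpq hRG
    exact hpq (h1 _ _ hRG)
  · -- successor inclusion
    intro p q hsub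
    -- show RF q.1 ⊆ RF p.1
    have key : {b | RF (q : X₁ × X₂).1 b} ⊆ {b | RF (p : X₁ × X₂).1 b} := by
      intro b hqb
      by_contra hpb
      obtain ⟨u, v, huv, hxu, hbv, hH2, hH3⟩ := hF.2.2 (p : X₁ × X₂).1 b hpb
      have hxv : ¬ RF (p : X₁ × X₂).1 v := fun h => huv (hxu h)
      have hmem : (u, v) ∈ grH RF := ⟨huv, hH2, hH3⟩
      have : grK RF q ⟨(u, v), hmem⟩ := hsub (a := ⟨(u, v), hmem⟩) hxv
      exact this (hbv hqb)
    have keyG := h2 _ _ key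
    intro r hpr hqr
    exact hpr (keyG hqr)
  · -- predecessor inclusion
    intro p q hsub
    have key : {a | RF a (q : X₁ × X₂).2} ⊆ {a | RF a (p : X₁ × X₂).2} := by
      intro a hqa
      by_contra hpa
      obtain ⟨u, v, huv, hau, hyv, hH2, hH3⟩ := hF.2.2 a (p : X₁ × X₂).2 hpa
      have huy : ¬ RF u (p : X₁ × X₂).2 := fun h => huv (hyv h)
      have hmem : (u, v) ∈ grH RF := ⟨huv, hH2, hH3⟩
      have : grK RF ⟨(u, v), hmem⟩ q := hsub (a := ⟨(u, v), hmem⟩) huy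
      exact this (hau hqa)
    have keyG := h3 _ _ key
    intro r hpr hqr
    exact hpr (keyG hqr)
end

section
/- Let C be a perfect lattice satisfying the condition (PTi). Then the frame F(C) = (J∞(C), M∞(C), ≤) satisfies the frame condition (Ti): for every x ∈ J∞(C) and y ∈ M∞(C) with x ≰ y, there exist w ∈ J∞(C) and z ∈ M∞(C) such that w ≰ z, xR ⊆ wR and Ry ⊆ Rz (where aRb means a ≤ b), every u ∈ J∞(C) with u ≠ w and wR ⊆ uR satisfies u ≤ z, and every v ∈ M∞(C) with v ≠ z and Rz ⊆ Rv satisfies w ≤ v. -/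
/-- An element of a complete lattice is completely join-irreducible if whenever it
is the supremum of a set, it belongs to that set. -/
def CompletelyJoinIrreducible {C : Type*} [CompleteLattice C] (p : C) : Prop :=
  ∀ S : Set C, p = sSup S → p ∈ S

/-- An element of a complete lattice is completely meet-irreducible if whenever it
is the infimum of a set, it belongs to that set. -/
def CompletelyMeetIrreducible {C : Type*} [CompleteLattice C] (p : C) : Prop :=
  ∀ S : Set C, p = sInf S → p ∈ S

/-- A perfect lattice: a complete lattice in which every element is a join of
completely join-irreducible elements and a meet of completely meet-irreducible
elements. -/
def IsPerfect (C : Type*) [CompleteLattice C] : Prop :=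
  ∀ a : C, a = sSup {p | CompletelyJoinIrreducible p ∧ p ≤ a} ∧
    a = sInf {q | CompletelyMeetIrreducible q ∧ a ≤ q}

/-- The condition (PTi) on a perfect lattice. -/
def PTi (C : Type*) [CompleteLattice C] : Prop :=
  ∀ x y : C, CompletelyJoinIrreducible x → CompletelyMeetIrreducible y → ¬ x ≤ y →
    ∃ w z : C, CompletelyJoinIrreducible w ∧ CompletelyMeetIrreducible z ∧
      w ≤ x ∧ y ≤ z ∧ ¬ w ≤ z ∧
      (∀ u, CompletelyJoinIrreducible u → u < w → u ≤ z) ∧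
      (∀ v, CompletelyMeetIrreducible v → y < v → w ≤ v)

/-- If a perfect lattice `C` satisfies (PTi), then the frame
`F(C) = (J∞(C), M∞(C), ≤)` satisfies the frame condition (Ti). Here, for
`x ∈ J∞(C)`, `xR = {b ∈ M∞(C) : x ≤ b}`, and for `y ∈ M∞(C)`,
`Ry = {a ∈ J∞(C) : a ≤ y}`. -/
theorem PTi_implies_frame_Ti {C : Type*} [CompleteLattice C]
    (hperf : IsPerfect C) (hPTi : PTi C) :
    ∀ x y : C, CompletelyJoinIrreducible x → CompletelyMeetIrreducible y → ¬ x ≤ y →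
      ∃ w z : C, CompletelyJoinIrreducible w ∧ CompletelyMeetIrreducible z ∧
        ¬ w ≤ z ∧
        {b | CompletelyMeetIrreducible b ∧ x ≤ b} ⊆ {b | CompletelyMeetIrreducible b ∧ w ≤ b} ∧
        {a | CompletelyJoinIrreducible a ∧ a ≤ y} ⊆ {a | CompletelyJoinIrreducible a ∧ a ≤ z} ∧
        (∀ u, CompletelyJoinIrreducible u → u ≠ w →
          {b | CompletelyMeetIrreducible b ∧ w ≤ b} ⊆ {b | CompletelyMeetIrreducible b ∧ u ≤ b} →
          u ≤ z) ∧
        (∀ v, CompletelyMeetIrreducible v → v ≠ z →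
          {a | CompletelyJoinIrreducible a ∧ a ≤ z} ⊆ {a | CompletelyJoinIrreducible a ∧ a ≤ v} →
          w ≤ v) := by
  intro x y hx hy hxy
  obtain ⟨w, z, hw, hz, hwx, hyz, hwz, h3, h4⟩ := hPTi x y hx hy hxy
  refine ⟨w, z, hw, hz, hwz, ?_, ?_, ?_, ?_⟩
  · rintro b ⟨hb, hxb⟩; exact ⟨hb, hwx.trans hxb⟩
  · rintro a ⟨ha, hay⟩; exact ⟨ha, hay.trans hyz⟩
  · intro u hu hne hsub
    have huw : u ≤ w := by
      have := (hperf w).2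
      rw [this]
      refine le_sInf fun b hb => ?_
      exact (hsub hb).2
    exact h3 u hu (lt_of_le_of_ne huw hne)
  · intro v hv hne hsub
    have hzv : z ≤ v := by
      have := (hperf z).1
      rw [this]
      refine sSup_le fun a ha => ?_
      exact (hsub ha).2
    exact h4 v hv (lt_of_le_of_lt hyz (lt_of_le_of_ne hzv (Ne.symm hne)))
end

section
/- Let X₁ = {aᵢ : i ∈ ω}, X₂ = {bⱼ : j ∈ ω}, and R = {(a₁,b₀), (a₀,b₁)} ∪ {(aᵢ,bⱼ) : i ≥ 2, 1 ≤ j ≤ i}. Then the frame (X₁, X₂, R) does not satisfy condition (Ti); in particular, for a₀ and b₀ with ¬(a₀Rb₀), there exist no w ∈ X₁ and z ∈ X₂ with ¬(wRz), a₀R ⊆ wR, Rb₀ ⊆ Rz, (∀u ≠ w)(wR ⊆ uR ⇒ uRz), and (∀v ≠ z)(Rz ⊆ Rv ⇒ wRv). -/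
/-- The frame with `X₁ = {aᵢ : i ∈ ω}`, `X₂ = {bⱼ : j ∈ ω}` (indexed by `ℕ`) and
`R = {(a₁,b₀), (a₀,b₁)} ∪ {(aᵢ,bⱼ) : i ≥ 2, 1 ≤ j ≤ i}`. -/
def R16 : ℕ → ℕ → Prop := fun i j =>
  (i = 1 ∧ j = 0) ∨ (i = 0 ∧ j = 1) ∨ (2 ≤ i ∧ 1 ≤ j ∧ j ≤ i)

/-- The frame `(ℕ, ℕ, R16)` does not satisfy condition (Ti); in particular
`¬(a₀ R b₀)`, yet there are no witnesses `w, z` for the pair `(a₀, b₀)`. -/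
theorem R16_not_Ti :
    ¬ FrameTi R16 ∧ ¬ R16 0 0 ∧
    ¬ ∃ (w z : ℕ), ¬ R16 w z ∧
        {j | R16 0 j} ⊆ {j | R16 w j} ∧ {i | R16 i 0} ⊆ {i | R16 i z} ∧
        (∀ u, u ≠ w → {j | R16 w j} ⊆ {j | R16 u j} → R16 u z) ∧
        (∀ v, v ≠ z → {i | R16 i z} ⊆ {i | R16 i v} → R16 w v) := by
  have h00 : ¬ R16 0 0 := by simp [R16]
  have key : ¬ ∃ (w z : ℕ), ¬ R16 w z ∧
      {j | R16 0 j} ⊆ {j | R16 w j} ∧ {i | R16 i 0} ⊆ {i | R16 i z} ∧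
      (∀ u, u ≠ w → {j | R16 w j} ⊆ {j | R16 u j} → R16 u z) ∧
      (∀ v, v ≠ z → {i | R16 i z} ⊆ {i | R16 i v} → R16 w v) := by
    rintro ⟨w, z, hwz, h1, h2, h3, h4⟩
    -- 1 R z, hence z = 0
    have h1z : R16 1 z := h2 (by simp [R16])
    have hz : z = 0 := by rcases h1z with ⟨_, h⟩ | ⟨h, _⟩ | ⟨h, _⟩ <;> omega
    subst hz
    -- w R 1, hence w = 0 or w ≥ 2
    have hw1 : R16 w 1 := h1 (by simp [R16])
    have hw : w = 0 ∨ 2 ≤ w := by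
      rcases hw1 with ⟨_, h⟩ | ⟨h, _⟩ | ⟨h, _⟩ <;> omega
    -- take u = w + 2
    have hsub : {j | R16 w j} ⊆ {j | R16 (w + 2) j} := by
      intro j hj
      rcases hj with ⟨hw', hj⟩ | ⟨hw', hj⟩ | ⟨hw', hj1, hj2⟩ <;>
        exact Or.inr (Or.inr (by omega))
    have := h3 (w + 2) (by omega) hsub
    rcases this with ⟨h, h'⟩ | ⟨h, _⟩ | ⟨_, h, _⟩ <;> omega
  refine ⟨?_, h00, key⟩
  intro hTi
  exact key (hTi 0 0 h00)
end

section
/- Let C be a complete lattice, x ∈ C completely join-irreducible and y ∈ C completely meet-irreducible with x ≰ y. Suppose w is completely join-irreducible and z is completely meet-irreducible witnessing the (PTi) condition for the pair (x,y): w ≤ x, y ≤ z, w ≰ z, every completely join-irreducible u < w satisfies u ≤ z, and every completely meet-irreducible v > y satisfies w ≤ v. If additionally C is perfect (every element is a join of completely join-irreducibles and a meet of completely meet-irreducibles), then the filter ↑w and the ideal ↓z form a maximal disjoint filter-ideal pair: ↑w ∩ ↓z = ∅, and for any filter F ⊋ ↑w we have F ∩ ↓z ≠ ∅, and for any ideal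 I ⊋ ↓z we have ↑w ∩ I ≠ ∅. -/
/-- A (lattice) filter of a complete lattice: a nonempty, up-closed, meet-closed
subset. -/
def IsLatFilter {C : Type*} [CompleteLattice C] (F : Set C) : Prop :=
  F.Nonempty ∧ (∀ a ∈ F, ∀ b, a ≤ b → b ∈ F) ∧ (∀ a ∈ F, ∀ b ∈ F, a ⊓ b ∈ F)

/-- A (lattice) ideal of a complete lattice: a nonempty, down-closed, join-closed
subset. -/
def IsLatIdeal {C : Type*} [CompleteLattice C] (I : Set C) : Prop :=
  I.Nonempty ∧ (∀ a ∈ I, ∀ b, b ≤ a → b ∈ I) ∧ (∀ a ∈ I, ∀ b ∈ I, a ⊔ b ∈ I)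

/-- If `w, z` witness the (PTi) condition for a pair `(x, y)` in a perfect lattice
`C`, then `(↑w, ↓z)` is a maximal disjoint filter-ideal pair. -/
theorem PTi_witness_maximal_pair {C : Type*} [CompleteLattice C]
    (hperf : IsPerfect C) (x y w z : C)
    (hx : CompletelyJoinIrreducible x) (hy : CompletelyMeetIrreducible y)
    (hxy : ¬ x ≤ y)
    (hw : CompletelyJoinIrreducible w) (hz : CompletelyMeetIrreducible z)
    (hwx : w ≤ x) (hyz : y ≤ z) (hwz : ¬ w ≤ z)
    (hu : ∀ u, CompletelyJoinIrreducible u → u < w → u ≤ z)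
    (hv : ∀ v, CompletelyMeetIrreducible v → y < v → w ≤ v) :
    Set.Ici w ∩ Set.Iic z = ∅ ∧
    (∀ F : Set C, IsLatFilter F → Set.Ici w ⊂ F → (F ∩ Set.Iic z).Nonempty) ∧
    (∀ I : Set C, IsLatIdeal I → Set.Iic z ⊂ I → (Set.Ici w ∩ I).Nonempty) := by

  refine ⟨?_, ?_, ?_⟩
  · ext c
    simp only [Set.mem_inter_iff, Set.mem_Ici, Set.mem_Iic, Set.mem_empty_iff_false,
      iff_false, not_and]
    exact fun hwc hcz => hwz (hwc.trans hcz)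
  · intro F hF hsub
    obtain ⟨hne, hup, hmeet⟩ := hF
    obtain ⟨hsub', hns⟩ := hsub
    obtain ⟨a, haF, haw⟩ := Set.not_subset.mp hns
    have hwF : w ∈ F := hsub' (le_refl w)
    have hwa : ¬ w ≤ a := fun h => haw h
    refine ⟨a ⊓ w, hmeet a haF w hwF, ?_⟩
    have h1 := (hperf (a ⊓ w)).1
    rw [Set.mem_Iic, h1]
    apply sSup_le
    rintro p ⟨hpj, hpaw⟩
    apply hu p hpj
    refine lt_of_le_of_ne (hpaw.trans inf_le_right) ?_
    rintro rfl
    exact hwa (hpaw.trans inf_le_left)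
  · intro I hI hsub
    obtain ⟨hne, hdown, hjoin⟩ := hI
    obtain ⟨hsub', hns⟩ := hsub
    obtain ⟨b, hbI, hbz⟩ := Set.not_subset.mp hns
    have hzI : z ∈ I := hsub' (le_refl z)
    have hbz' : ¬ b ≤ z := fun h => hbz h
    refine ⟨b ⊔ z, ?_, hjoin b hbI z hzI⟩
    have h1 := (hperf (b ⊔ z)).2
    rw [Set.mem_Ici, h1]
    apply le_sInf
    rintro v ⟨hvm, hbzv⟩
    apply hv v hvm
    have hzv : z ≤ v := le_sup_right.trans hbzv
    refine lt_of_le_of_lt hyz (lt_of_le_of_ne hzv ?_)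
    rintro rfl
    exact hbz' (le_sup_left.trans hbzv)
end
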